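/- arXiv:math/0603426 — 7 statements merged into one kernel-verified Lean document; each statement's English description precedes it below -/
import Mathlib

section
/- In the algebra A(S⁷_{θ'}) with deformation matrix λ'_{ab} as specified, the matrix Ψ with columns (ψ₁, ψ₂, ψ₃, ψ₄)ᵗ and (−ψ₂*, ψ₁*, −ψ₄*, ψ₃*)ᵗ satisfies Ψ†Ψ = 𝕀₂, i.e. ψ₁*ψ₁ + ψ₂*ψ₂ + ψ₃*ψ₃ + ψ₄*ψ₄ = 1, ψ₂ψ₁ − ψ₁ψ₂ + ψ₄ψ₃ − ψ₃ψ₄ = 0 (suitably interpreted with the twisted relations), and the off-diagonal entries of Ψ†Ψ vanish. -/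
/-
The rows of `Ψ` come in two pairs, each forming a block `!![a, -b⋆; b, a⋆]`. If `a` and `b`
commute and are normal (then `a⋆` and `b⋆` commute too, by taking adjoints), such a block
satisfies `Bᴴ B = (a⋆a + b⋆b) • 1`, so `ΨᴴΨ` is the scalar
`∑ ψₐ⋆ψₐ = 1`. The deformation matrix `λ'` equals `1` on the diagonal and at `(0,1)` and `(2,3)`,
which is exactly what gives commutativity within each pair and normality of each `ψₐ`.
-/

open Matrix

section QuaternionMatrix

variable {R : Type*} [Ring R] [StarRing R]

def quaternionMatrix (a b : R) : Matrix (Fin 2) (Fin 2) R :=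
  !![a, -star b; b, star a]

theorem conjTranspose_quaternionMatrix_mul_self {a b : R} (hab : Commute a b)
    [IsStarNormal a] [IsStarNormal b] :
    (quaternionMatrix a b)ᴴ * quaternionMatrix a b =
      scalar (Fin 2) (star a * a + star b * b) := by
  have hab_star : star b * star a = star a * star b := hab.star_star.eq.symm
  ext i j
  fin_cases i <;> fin_cases j <;>
    simp [quaternionMatrix, mul_apply, Fin.sum_univ_two, star_comm_self' a, star_comm_self' b,
      hab.eq, hab_star, add_comm]

theorem conjTranspose_mul_self_of_quaternionRows (ψ : Fin 4 → R)
    (h01 : Commute (ψ 0) (ψ 1)) (h23 : Commute (ψ 2) (ψ 3)) [∀ a, IsStarNormal (ψ a)] :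
    (Matrix.of ![![ψ 0, -star (ψ 1)], ![ψ 1, star (ψ 0)],
        ![ψ 2, -star (ψ 3)], ![ψ 3, star (ψ 2)]])ᴴ *
      Matrix.of ![![ψ 0, -star (ψ 1)], ![ψ 1, star (ψ 0)],
        ![ψ 2, -star (ψ 3)], ![ψ 3, star (ψ 2)]] =
      scalar (Fin 2) (∑ a, star (ψ a) * ψ a) := by
  have hstack : Matrix.of ![![ψ 0, -star (ψ 1)], ![ψ 1, star (ψ 0)],
        ![ψ 2, -star (ψ 3)], ![ψ 3, star (ψ 2)]] =
      (fromRows (quaternionMatrix (ψ 0) (ψ 1)) (quaternionMatrix (ψ 2) (ψ 3))).submatrix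
        finSumFinEquiv.symm id := by
    ext i j
    fin_cases i <;> fin_cases j <;> rfl
  rw [hstack, conjTranspose_submatrix, submatrix_mul_equiv, submatrix_id_id,
    conjTranspose_fromRows_eq_fromCols_conjTranspose, fromCols_mul_fromRows,
    conjTranspose_quaternionMatrix_mul_self h01, conjTranspose_quaternionMatrix_mul_self h23,
    ← map_add, Fin.sum_univ_four, add_assoc (star (ψ 0) * ψ 0 + _)]

end QuaternionMatrix

theorem stmt_2_general (A : Type*) [Ring A] [Algebra ℂ A] [StarRing A]
    (μ : ℂ)
    (lam' : Matrix (Fin 4) (Fin 4) ℂ)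
    (hlam' : lam' = !![1, 1, star μ, μ;
                       1, 1, μ, star μ;
                       μ, star μ, 1, 1;
                       star μ, μ, 1, 1])
    (ψ : Fin 4 → A)
    (hrel1 : ∀ a b, ψ a * ψ b = lam' a b • (ψ b * ψ a))
    (hrel2 : ∀ a b, ψ a * star (ψ b) = lam' b a • (star (ψ b) * ψ a))
    (hsph : ∑ a, star (ψ a) * ψ a = 1)
    (Ψ : Matrix (Fin 4) (Fin 2) A)
    (hΨ : Ψ = Matrix.of ![![ψ 0, -star (ψ 1)],
                          ![ψ 1, star (ψ 0)],
                          ![ψ 2, -star (ψ 3)],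
                          ![ψ 3, star (ψ 2)]]) :
    Ψ.conjTranspose * Ψ = 1 := by
  have hdiag (a : Fin 4) : lam' a a = 1 := by
    fin_cases a <;> simp [hlam']
  have h01 : ψ 0 * ψ 1 = ψ 1 * ψ 0 := by simpa [hlam'] using hrel1 0 1
  have h23 : ψ 2 * ψ 3 = ψ 3 * ψ 2 := by simpa [hlam'] using hrel1 2 3
  have hnormal (a : Fin 4) : IsStarNormal (ψ a) :=
    ⟨(by simpa [hdiag] using (hrel2 a a).symm : star (ψ a) * ψ a = ψ a * star (ψ a))⟩
  rw [hΨ, conjTranspose_mul_self_of_quaternionRows ψ h01 h23, hsph, map_one]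

/-- In the algebra `A(S⁷_{θ'})` with the specified deformation matrix
`λ'_{ab}` (with `μ = e^{πiθ}`), the 4×2 matrix `Ψ` with columns
`(ψ₁, ψ₂, ψ₃, ψ₄)ᵗ` and `(−ψ₂*, ψ₁*, −ψ₄*, ψ₃*)ᵗ` satisfies `Ψ†Ψ = 𝕀₂`. -/
theorem stmt_2 (θ : ℝ) (A : Type*) [Ring A] [Algebra ℂ A] [StarRing A]
    [StarModule ℂ A]
    (μ : ℂ) (hμ : μ = Complex.exp (Real.pi * Complex.I * θ))
    (lam' : Matrix (Fin 4) (Fin 4) ℂ)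
    (hlam' : lam' = !![1, 1, star μ, μ;
                       1, 1, μ, star μ;
                       μ, star μ, 1, 1;
                       star μ, μ, 1, 1])
    (ψ : Fin 4 → A)
    (hrel1 : ∀ a b, ψ a * ψ b = lam' a b • (ψ b * ψ a))
    (hrel2 : ∀ a b, ψ a * star (ψ b) = lam' b a • (star (ψ b) * ψ a))
    (hrel3 : ∀ a b, star (ψ a) * star (ψ b) = lam' a b • (star (ψ b) * star (ψ a)))
    (hsph : ∑ a, star (ψ a) * ψ a = 1)
    (Ψ : Matrix (Fin 4) (Fin 2) A)
    (hΨ : Ψ = Matrix.of ![![ψ 0, -star (ψ 1)],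
                          ![ψ 1, star (ψ 0)],
                          ![ψ 2, -star (ψ 3)],
                          ![ψ 3, star (ψ 2)]]) :
    Ψ.conjTranspose * Ψ = 1 :=
  stmt_2_general A μ lam' hlam' ψ hrel1 hrel2 hsph Ψ hΨ
end

section
/- The elements z₀ = 2(ψ₁*ψ₁+ψ₂*ψ₂)−1, z₁ = 2(μψ₃*ψ₁+ψ₂*ψ₄), z₂ = 2(−ψ₁*ψ₄+μ̄ψ₃*ψ₂) in A(S⁷_{θ'}) satisfy the sphere relation z₁*z₁ + z₂*z₂ + z₀² = 1, the commutation relations z₁z₂ = λ z₂z₁ and z₁z₂* = λ̄ z₂*z₁ with λ = e^{2πiθ} = μ², and z₀ is central among z₀, z₁, z₂, z₁*, z₂*. -/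
/-!
All eight generators `ψ a`, `star (ψ a)` commute pairwise up to phases, so a monomial can be
reordered at the cost of a scalar. Each `star (ψ a) * ψ a` commutes with every generator (the two
phases met when moving a generator past `star (ψ a)` and past `ψ a` cancel), hence is central in the
star-algebra generated by the `ψ a`, and so is `z₀`. Two bilinears `star (ψ i) * ψ j` commute up to
the product of four phases, which is `μ²` for every pair of terms in `z₁ z₂` and `μ̄²` for every
pair in `z₁ (star z₂)`. For the sphere relation put `P = ψ₁*ψ₁ + ψ₂*ψ₂`, `Q = ψ₃*ψ₃ + ψ₄*ψ₄`:
then `P + Q = 1` and `z₀ = P - Q`, while in `z₁*z₁ + z₂*z₂` the diagonal terms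
`ψ_a* ψ_b ψ_b* ψ_a = (ψ_b* ψ_b)(ψ_a* ψ_a)` add up to `4PQ` and the cross terms cancel in pairs.
As `P` and `Q` commute, the sum is `4PQ + (P - Q)² = (P + Q)² = 1`.
-/

def QCommute {R A : Type*} [Mul A] [SMul R A] (c : R) (x y : A) : Prop :=
  x * y = c • (y * x)

namespace QCommute

section Semiring

variable {R A : Type*} [CommSemiring R] [Semiring A] [Algebra R A] {a b c : R} {x y z w : A}

theorem commute (h : QCommute (1 : R) x y) : Commute x y := by
  rw [QCommute, one_smul] at h
  exact h

theorem mul_left (hx : QCommute a x z) (hy : QCommute b y z) : QCommute (a * b) (x * y) z := by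
  unfold QCommute at *
  rw [mul_assoc, hy, mul_smul_comm, ← mul_assoc, hx, smul_mul_assoc, smul_smul, mul_comm b,
    mul_assoc]

theorem mul_right (hy : QCommute a x y) (hz : QCommute b x z) : QCommute (a * b) x (y * z) := by
  unfold QCommute at *
  rw [← mul_assoc, hy, smul_mul_assoc, mul_assoc, hz, mul_smul_comm, smul_smul, mul_assoc]

theorem add_left (hx : QCommute a x z) (hy : QCommute a y z) : QCommute a (x + y) z := by
  unfold QCommute at *
  rw [add_mul, hx, hy, mul_add, smul_add]

theorem add_right (hy : QCommute a x y) (hz : QCommute a x z) : QCommute a x (y + z) := by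
  unfold QCommute at *
  rw [mul_add, hy, hz, add_mul, smul_add]

theorem smul_left (h : QCommute a x y) (b : R) : QCommute a (b • x) y := by
  unfold QCommute at *
  rw [smul_mul_assoc, h, mul_smul_comm, smul_comm]

theorem smul_right (h : QCommute a x y) (b : R) : QCommute a x (b • y) := by
  unfold QCommute at *
  rw [mul_smul_comm, h, smul_mul_assoc, smul_comm]

theorem commute_mul (hxy : QCommute a x y) (hyw : QCommute a y w) : Commute (w * x) y := by
  unfold QCommute at *
  rw [Commute, SemiconjBy, mul_assoc, hxy, mul_smul_comm, ← mul_assoc, ← smul_mul_assoc, ← hyw,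
    mul_assoc]

theorem mul_mul_rev (hxy : QCommute a x y) (hxz : QCommute b x z) (hyz : QCommute c y z) :
    x * y * z = (c * b * a) • (z * y * x) := by
  unfold QCommute at *
  rw [mul_assoc, hyz, mul_smul_comm, ← mul_assoc, hxz, smul_mul_assoc, mul_assoc, hxy,
    mul_smul_comm, smul_smul, smul_smul, ← mul_assoc]

end Semiring

theorem neg_right {R A : Type*} [CommRing R] [Ring A] [Algebra R A] {a : R} {x y : A}
    (h : QCommute a x y) : QCommute a x (-y) := by
  unfold QCommute at *
  rw [mul_neg, h, neg_mul, smul_neg]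

theorem symm {K A : Type*} [Field K] [Ring A] [Algebra K A] {a : K} {x y : A}
    (h : QCommute a x y) (ha : a ≠ 0) : QCommute a⁻¹ y x := by
  unfold QCommute at *
  rw [h, inv_smul_smul₀ ha]

end QCommute

theorem Commute.four_mul_add_sub_sq {R : Type*} [Ring R] {a b : R} (h : Commute a b) :
    4 * (a * b) + (a - b) ^ 2 = (a + b) ^ 2 := by
  rw [h.sub_sq, h.add_sq]
  noncomm_ring

structure IsDeformedFamily {ι A : Type*} [Ring A] [Algebra ℂ A] [StarRing A]
    (q : Matrix ι ι ℂ) (ψ : ι → A) : Prop where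
  mul : ∀ a b, QCommute (q a b) (ψ a) (ψ b)
  mul_star : ∀ a b, QCommute (q b a) (ψ a) (star (ψ b))
  star_mul_star : ∀ a b, QCommute (q a b) (star (ψ a)) (star (ψ b))

namespace IsDeformedFamily

variable {ι A : Type*} [Ring A] [Algebra ℂ A] [StarRing A] {q : Matrix ι ι ℂ} {ψ : ι → A}

theorem star_mul (h : IsDeformedFamily q ψ) {a b : ι} (hq : q a b ≠ 0) :
    QCommute (q a b)⁻¹ (star (ψ a)) (ψ b) :=
  (h.mul_star b a).symm hq

theorem commute_star_mul_self (h : IsDeformedFamily q ψ) (a b : ι) :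
    Commute (star (ψ a) * ψ a) (ψ b) :=
  (h.mul a b).commute_mul (h.mul_star b a)

theorem commute_star_mul_self_star (h : IsDeformedFamily q ψ) (a b : ι) :
    Commute (star (ψ a) * ψ a) (star (ψ b)) := by
  simpa using (h.commute_star_mul_self a b).star_star

theorem commute_star_mul_self_star_mul_self (h : IsDeformedFamily q ψ) (a b : ι) :
    Commute (star (ψ a) * ψ a) (star (ψ b) * ψ b) :=
  (h.commute_star_mul_self_star a b).mul_right (h.commute_star_mul_self a b)

theorem qcommute_star_mul_star_mul (h : IsDeformedFamily q ψ) {i j k l : ι} {c : ℂ}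
    (hq : q i l ≠ 0) (hc : q i k * (q i l)⁻¹ * (q k j * q j l) = c) :
    QCommute c (star (ψ i) * ψ j) (star (ψ k) * ψ l) :=
  hc ▸ ((h.star_mul_star i k).mul_right (h.star_mul hq)).mul_left
    ((h.mul_star j k).mul_right (h.mul j l))

theorem star_mul_mul_star_mul_rev (h : IsDeformedFamily q ψ) {i j k l : ι} {c : ℂ}
    (hq : q i j ≠ 0) (hc : q k j * q i k * (q i j)⁻¹ = c) :
    star (ψ i) * ψ j * (star (ψ k) * ψ l) = c • (star (ψ k) * ψ j * (star (ψ i) * ψ l)) := by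
  rw [← mul_assoc, (h.star_mul hq).mul_mul_rev (h.star_mul_star i k) (h.mul_star j k), hc,
    smul_mul_assoc, mul_assoc (star (ψ k) * ψ j)]

theorem star_mul_mul_star_mul_swap (h : IsDeformedFamily q ψ) {a b : ι} (hq : q b b = 1) :
    star (ψ a) * ψ b * (star (ψ b) * ψ a) = star (ψ b) * ψ b * (star (ψ a) * ψ a) := by
  have hb : Commute (ψ b) (star (ψ b)) := QCommute.commute (by simpa [hq] using h.mul_star b b)
  calc star (ψ a) * ψ b * (star (ψ b) * ψ a) = star (ψ a) * (ψ b * star (ψ b)) * ψ a := by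
        simp only [mul_assoc]
    _ = star (ψ b) * ψ b * star (ψ a) * ψ a := by
        rw [hb.eq, (h.commute_star_mul_self_star b a).eq]
    _ = star (ψ b) * ψ b * (star (ψ a) * ψ a) := mul_assoc _ _ _

variable [StarModule ℂ A]

theorem adjoin_le_centralizer (h : IsDeformedFamily q ψ) (a : ι) :
    StarAlgebra.adjoin ℂ (Set.range ψ) ≤ StarSubalgebra.centralizer ℂ {star (ψ a) * ψ a} := by
  refine StarAlgebra.adjoin_le ?_
  rintro _ ⟨b, rfl⟩
  rw [SetLike.mem_coe, StarSubalgebra.mem_centralizer_iff]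
  simp only [Set.mem_singleton_iff, forall_eq]
  rw [star_star_mul]
  exact ⟨(h.commute_star_mul_self a b).eq, (h.commute_star_mul_self a b).eq⟩

theorem commute_of_mem_adjoin (h : IsDeformedFamily q ψ) (a : ι) {x : A}
    (hx : x ∈ StarAlgebra.adjoin ℂ (Set.range ψ)) : Commute (star (ψ a) * ψ a) x :=
  ((StarSubalgebra.mem_centralizer_iff ℂ).1 (h.adjoin_le_centralizer a hx) _ rfl).1

end IsDeformedFamily

theorem star_mul_mem_adjoin {ι A : Type*} [Ring A] [Algebra ℂ A] [StarRing A] [StarModule ℂ A]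
    (ψ : ι → A) (i j : ι) : star (ψ i) * ψ j ∈ StarAlgebra.adjoin ℂ (Set.range ψ) :=
  mul_mem (star_mem (StarAlgebra.subset_adjoin ℂ _ ⟨i, rfl⟩))
    (StarAlgebra.subset_adjoin ℂ _ ⟨j, rfl⟩)

/-- The matrix `λ'` of `A(S⁷_{θ'})`, where `μ = e^{πiθ}`. -/
def s7PhaseMatrix (μ : ℂ) : Matrix (Fin 4) (Fin 4) ℂ :=
  !![1, 1, star μ, μ;
     1, 1, μ, star μ;
     μ, star μ, 1, 1;
     star μ, μ, 1, 1]

theorem s7PhaseMatrix_ne_zero {μ : ℂ} (hμ : star μ * μ = 1) (a b : Fin 4) :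
    s7PhaseMatrix μ a b ≠ 0 := by
  have hμ0 : μ ≠ 0 := right_ne_zero_of_mul_eq_one hμ
  fin_cases a <;> fin_cases b <;> simp [s7PhaseMatrix, hμ0]

section Hopf

variable {A : Type*} [Ring A] [Algebra ℂ A] [StarRing A] {μ : ℂ} {ψ : Fin 4 → A}

def hopfZ₀ (ψ : Fin 4 → A) : A := (2 : ℂ) • (star (ψ 0) * ψ 0 + star (ψ 1) * ψ 1) - 1

def hopfZ₁ (μ : ℂ) (ψ : Fin 4 → A) : A :=
  (2 : ℂ) • (μ • (star (ψ 2) * ψ 0) + star (ψ 1) * ψ 3)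

def hopfZ₂ (μ : ℂ) (ψ : Fin 4 → A) : A :=
  (2 : ℂ) • (-(star (ψ 0) * ψ 3) + star μ • (star (ψ 2) * ψ 1))

theorem qcommute_hopfZ₁_hopfZ₂ (hμ : star μ * μ = 1) (h : IsDeformedFamily (s7PhaseMatrix μ) ψ) :
    QCommute (μ ^ 2) (hopfZ₁ μ ψ) (hopfZ₂ μ ψ) := by
  have hμ' : star μ = μ⁻¹ := eq_inv_of_mul_eq_one_left hμ
  unfold hopfZ₁ hopfZ₂
  apply_rules [QCommute.smul_left, QCommute.smul_right, QCommute.add_left, QCommute.add_right,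
    QCommute.neg_right]
  all_goals
    exact h.qcommute_star_mul_star_mul (s7PhaseMatrix_ne_zero hμ _ _)
      (by simp [s7PhaseMatrix, hμ']; field_simp)

variable [StarModule ℂ A]

theorem qcommute_hopfZ₁_star_hopfZ₂ (hμ : star μ * μ = 1)
    (h : IsDeformedFamily (s7PhaseMatrix μ) ψ) :
    QCommute (star (μ ^ 2)) (hopfZ₁ μ ψ) (star (hopfZ₂ μ ψ)) := by
  have hμ' : star μ = μ⁻¹ := eq_inv_of_mul_eq_one_left hμ
  simp only [hopfZ₁, hopfZ₂, star_smul, star_add, star_neg, star_mul, star_star, star_ofNat]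
  apply_rules [QCommute.smul_left, QCommute.smul_right, QCommute.add_left, QCommute.add_right,
    QCommute.neg_right]
  all_goals
    exact h.qcommute_star_mul_star_mul (s7PhaseMatrix_ne_zero hμ _ _)
      (by simp [s7PhaseMatrix, hμ']; field_simp)

theorem star_hopfZ₁_mul_self_add (hμ : star μ * μ = 1) (h : IsDeformedFamily (s7PhaseMatrix μ) ψ) :
    star (hopfZ₁ μ ψ) * hopfZ₁ μ ψ + star (hopfZ₂ μ ψ) * hopfZ₂ μ ψ
      = (4 : ℂ) • ((star (ψ 0) * ψ 0 + star (ψ 1) * ψ 1)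
          * (star (ψ 2) * ψ 2 + star (ψ 3) * ψ 3)) := by
  have hμ' : star μ = μ⁻¹ := eq_inv_of_mul_eq_one_left hμ
  have hμ0 : μ ≠ 0 := right_ne_zero_of_mul_eq_one hμ
  have hdiag : ∀ b, s7PhaseMatrix μ b b = 1 := by
    intro b
    fin_cases b <;> rfl
  have cross : star (ψ 0) * ψ 2 * (star (ψ 1) * ψ 3)
      = μ ^ 2 • (star (ψ 1) * ψ 2 * (star (ψ 0) * ψ 3)) :=
    h.star_mul_mul_star_mul_rev (s7PhaseMatrix_ne_zero hμ _ _)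
      (by simp [s7PhaseMatrix, hμ']; field_simp)
  have cross' : star (ψ 3) * ψ 1 * (star (ψ 2) * ψ 0)
      = star μ ^ 2 • (star (ψ 3) * ψ 0 * (star (ψ 2) * ψ 1)) := by
    simpa only [star_mul, star_smul, star_star, star_pow, mul_assoc] using congrArg star cross
  simp only [hopfZ₁, hopfZ₂, star_smul, star_add, star_neg, star_mul, star_star, star_ofNat,
    smul_add, smul_neg, add_mul, mul_add, neg_mul, mul_neg, smul_mul_assoc, mul_smul_comm]
  rw [cross, cross', h.star_mul_mul_star_mul_swap (a := 0) (b := 2) (hdiag _),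
    h.star_mul_mul_star_mul_swap (a := 3) (b := 1) (hdiag _),
    h.star_mul_mul_star_mul_swap (a := 3) (b := 0) (hdiag _),
    h.star_mul_mul_star_mul_swap (a := 1) (b := 2) (hdiag _),
    (h.commute_star_mul_self_star_mul_self 2 0).eq, (h.commute_star_mul_self_star_mul_self 2 1).eq]
  match_scalars <;> simp [hμ'] <;> field_simp <;> ring

theorem star_hopfZ₁_mul_self_add_add_sq (hμ : star μ * μ = 1)
    (h : IsDeformedFamily (s7PhaseMatrix μ) ψ) (hψ : ∑ a, star (ψ a) * ψ a = 1) :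
    star (hopfZ₁ μ ψ) * hopfZ₁ μ ψ + star (hopfZ₂ μ ψ) * hopfZ₂ μ ψ + hopfZ₀ ψ ^ 2 = 1 := by
  have hPQ : (star (ψ 0) * ψ 0 + star (ψ 1) * ψ 1) + (star (ψ 2) * ψ 2 + star (ψ 3) * ψ 3) = 1 := by
    rw [← hψ, Fin.sum_univ_four, ← add_assoc]
  have hz₀ : hopfZ₀ ψ
      = (star (ψ 0) * ψ 0 + star (ψ 1) * ψ 1) - (star (ψ 2) * ψ 2 + star (ψ 3) * ψ 3) := by
    rw [hopfZ₀, two_smul, ← hPQ]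
    abel
  have hc := h.commute_star_mul_self_star_mul_self
  have hPQc : Commute (star (ψ 0) * ψ 0 + star (ψ 1) * ψ 1)
      (star (ψ 2) * ψ 2 + star (ψ 3) * ψ 3) :=
    ((hc 0 2).add_right (hc 0 3)).add_left ((hc 1 2).add_right (hc 1 3))
  rw [star_hopfZ₁_mul_self_add hμ h, hz₀, Algebra.smul_def, map_ofNat, hPQc.four_mul_add_sub_sq,
    hPQ, one_pow]

theorem hopfZ₁_mem_adjoin : hopfZ₁ μ ψ ∈ StarAlgebra.adjoin ℂ (Set.range ψ) :=
  StarSubalgebra.smul_mem _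
    (add_mem (StarSubalgebra.smul_mem _ (star_mul_mem_adjoin ψ 2 0) μ)
      (star_mul_mem_adjoin ψ 1 3)) 2

theorem hopfZ₂_mem_adjoin : hopfZ₂ μ ψ ∈ StarAlgebra.adjoin ℂ (Set.range ψ) :=
  StarSubalgebra.smul_mem _
    (add_mem (neg_mem (star_mul_mem_adjoin ψ 0 3))
      (StarSubalgebra.smul_mem _ (star_mul_mem_adjoin ψ 2 1) _)) 2

theorem IsDeformedFamily.commute_hopfZ₀ {q : Matrix (Fin 4) (Fin 4) ℂ}
    (h : IsDeformedFamily q ψ) {x : A} (hx : x ∈ StarAlgebra.adjoin ℂ (Set.range ψ)) :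
    Commute (hopfZ₀ ψ) x :=
  (((h.commute_of_mem_adjoin 0 hx).add_left (h.commute_of_mem_adjoin 1 hx)).smul_left 2).sub_left
    (Commute.one_left x)

end Hopf

/-- The elements `z₀ = 2(ψ₁*ψ₁+ψ₂*ψ₂)−1`, `z₁ = 2(μψ₃*ψ₁+ψ₂*ψ₄)`,
`z₂ = 2(−ψ₁*ψ₄+μ̄ψ₃*ψ₂)` of `A(S⁷_{θ'})` satisfy the sphere relation
`z₁*z₁ + z₂*z₂ + z₀² = 1`, the commutation relations `z₁z₂ = λ z₂z₁` and
`z₁z₂* = λ̄ z₂*z₁` with `λ = e^{2πiθ} = μ²`, and `z₀` is central among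
`z₀, z₁, z₂, z₁*, z₂*`. -/
theorem stmt_4 (θ : ℝ) (A : Type*) [Ring A] [Algebra ℂ A] [StarRing A]
    [StarModule ℂ A]
    (μ : ℂ) (hμ : μ = Complex.exp (Real.pi * Complex.I * θ))
    (lam : ℂ) (hlam : lam = μ ^ 2)
    (lam' : Matrix (Fin 4) (Fin 4) ℂ)
    (hlam' : lam' = !![1, 1, star μ, μ;
                       1, 1, μ, star μ;
                       μ, star μ, 1, 1;
                       star μ, μ, 1, 1])
    (ψ : Fin 4 → A)
    (hrel1 : ∀ a b, ψ a * ψ b = lam' a b • (ψ b * ψ a))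
    (hrel2 : ∀ a b, ψ a * star (ψ b) = lam' b a • (star (ψ b) * ψ a))
    (hrel3 : ∀ a b, star (ψ a) * star (ψ b) = lam' a b • (star (ψ b) * star (ψ a)))
    (hsph : ∑ a, star (ψ a) * ψ a = 1)
    (z₀ z₁ z₂ : A)
    (hz₀ : z₀ = (2 : ℂ) • (star (ψ 0) * ψ 0 + star (ψ 1) * ψ 1) - 1)
    (hz₁ : z₁ = (2 : ℂ) • (μ • (star (ψ 2) * ψ 0) + star (ψ 1) * ψ 3))
    (hz₂ : z₂ = (2 : ℂ) • (-(star (ψ 0) * ψ 3) + star μ • (star (ψ 2) * ψ 1))) :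
    star z₁ * z₁ + star z₂ * z₂ + z₀ ^ 2 = 1 ∧
    z₁ * z₂ = lam • (z₂ * z₁) ∧
    z₁ * star z₂ = star lam • (star z₂ * z₁) ∧
    z₀ * z₁ = z₁ * z₀ ∧ z₀ * z₂ = z₂ * z₀ ∧
    z₀ * star z₁ = star z₁ * z₀ ∧ z₀ * star z₂ = star z₂ * z₀ := by
  have hμ1 : star μ * μ = 1 := by
    have hnorm : ‖μ‖ = 1 := by
      rw [hμ, show (Real.pi : ℂ) * Complex.I * θ = ((Real.pi * θ : ℝ) : ℂ) * Complex.I by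
        push_cast; ring]
      exact Complex.norm_exp_ofReal_mul_I _
    rw [Complex.star_def, Complex.conj_mul', hnorm, Complex.ofReal_one, one_pow]
  subst hlam hlam' hz₀ hz₁ hz₂
  have h : IsDeformedFamily (s7PhaseMatrix μ) ψ := ⟨hrel1, hrel2, hrel3⟩
  exact ⟨star_hopfZ₁_mul_self_add_add_sq hμ1 h hsph, qcommute_hopfZ₁_hopfZ₂ hμ1 h,
    qcommute_hopfZ₁_star_hopfZ₂ hμ1 h, h.commute_hopfZ₀ hopfZ₁_mem_adjoin,
    h.commute_hopfZ₀ hopfZ₂_mem_adjoin, h.commute_hopfZ₀ (star_mem hopfZ₁_mem_adjoin),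
    h.commute_hopfZ₀ (star_mem hopfZ₂_mem_adjoin)⟩
end

section
/- For each of the spinor representation matrices Γ ∈ {H₁, H₂, E_{+1,+1}, E_{+1,−1}, E_{+1,0}, E_{0,+1}} and their adjoints, the identity Γ̃ᵗ λ^{−r₁H₂} + λ^{r₂H₁} Γ = 0 holds, where Γ̃ = σΓσ⁻¹ with σ the 4×4 block-diagonal matrix with blocks [[0,−1],[1,0]], r = (r₁,r₂) the corresponding root (r = (0,0) for H_j), and λ^{±H_j} is the diagonal matrix exponential of the explicit 4×4 matrices H₁ = diag(1,−1,−1,1)/2, H₂ = diag(−1,1,−1,1)/2 with λ = e^{2πiθ}. -/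
/-!
Conjugation by `σ` is a signed permutation of the basis that swaps `e₁ ↔ e₂` and `e₃ ↔ e₄`, so
the `(i, j)` entry of `(σ Γ σ⁻¹)ᵀ` is `± Γ (π j) (π i)`. As the `λ`-matrices are diagonal, the
identity becomes an entrywise statement, which is checked generator by generator using
`μ̄ = μ⁻¹`. The normalisation `1/√2` of `E_{+1,0}`, `E_{0,+1}` plays no role since the identity
is linear in `Γ`.
-/

open Matrix

namespace Spinor

variable {K : Type*} [Field K]

def sigma : Matrix (Fin 4) (Fin 4) K := !![0,-1,0,0; 1,0,0,0; 0,0,0,-1; 0,0,1,0]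

def pairSwap : Fin 4 → Fin 4 := ![1, 0, 3, 2]

def pairSign : Fin 4 → K := ![-1, 1, -1, 1]

/-- With `a = λ^{c/2}`, `lamH1 a = λ^{cH₁}` and `lamH2 a = λ^{cH₂}`. -/
def lamH1 (a : K) : Matrix (Fin 4) (Fin 4) K := diagonal ![a, a⁻¹, a⁻¹, a]

def lamH2 (a : K) : Matrix (Fin 4) (Fin 4) K := diagonal ![a⁻¹, a, a⁻¹, a]

/-- `Γ̃ᵗ λ^{-r₁H₂} + λ^{r₂H₁} Γ = 0`, written with `a = λ^{-r₁/2}` and `b = λ^{r₂/2}`. -/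
def IsTwistInvariant (Γ : Matrix (Fin 4) (Fin 4) K) (a b : K) : Prop :=
  (sigma * Γ * sigma⁻¹)ᵀ * lamH2 a + lamH1 b * Γ = 0

theorem sigma_inv : (sigma : Matrix (Fin 4) (Fin 4) K)⁻¹ = -sigma := by
  refine inv_eq_right_inv ?_
  ext i j
  fin_cases i <;> fin_cases j <;> simp [sigma, mul_apply, Fin.sum_univ_four]

theorem transpose_sigma_mul_mul_sigma_inv_apply (Γ : Matrix (Fin 4) (Fin 4) K) (i j : Fin 4) :
    (sigma * Γ * sigma⁻¹)ᵀ i j = pairSign i * pairSign j * Γ (pairSwap j) (pairSwap i) := by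
  rw [sigma_inv, transpose_apply]
  simp only [mul_apply, Fin.sum_univ_four]
  fin_cases i <;> fin_cases j <;> simp [sigma, pairSign, pairSwap]

theorem isTwistInvariant_iff {Γ : Matrix (Fin 4) (Fin 4) K} {a b : K} :
    IsTwistInvariant Γ a b ↔ ∀ i j,
      pairSign i * pairSign j * Γ (pairSwap j) (pairSwap i) * ![a⁻¹, a, a⁻¹, a] j
        + ![b, b⁻¹, b⁻¹, b] i * Γ i j = 0 := by
  simp only [IsTwistInvariant, ← ext_iff, Matrix.add_apply, lamH1, lamH2, mul_diagonal,
    diagonal_mul, transpose_sigma_mul_mul_sigma_inv_apply, Matrix.zero_apply]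

theorem IsTwistInvariant.smul {Γ : Matrix (Fin 4) (Fin 4) K} {a b : K}
    (h : IsTwistInvariant Γ a b) (c : K) : IsTwistInvariant (c • Γ) a b := by
  rw [isTwistInvariant_iff] at *
  intro i j
  simp only [Matrix.smul_apply, smul_eq_mul]
  linear_combination c * h i j

def H1 : Matrix (Fin 4) (Fin 4) K := (1/2 : K) • diagonal ![1, -1, -1, 1]

def H2 : Matrix (Fin 4) (Fin 4) K := (1/2 : K) • diagonal ![-1, 1, -1, 1]

def Epp : Matrix (Fin 4) (Fin 4) K := !![0,0,0,0; 0,0,0,0; 0,0,0,-1; 0,0,0,0]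

def Epm (u : K) : Matrix (Fin 4) (Fin 4) K := !![0,0,0,0; -u,0,0,0; 0,0,0,0; 0,0,0,0]

def Ep0 (u : K) : Matrix (Fin 4) (Fin 4) K := !![0,0,0,0; 0,0,0,-1; u,0,0,0; 0,0,0,0]

def E0p [Star K] (u : K) : Matrix (Fin 4) (Fin 4) K :=
  !![0,0,0,star u; 0,0,0,0; 0,1,0,0; 0,0,0,0]

variable [StarRing K] {u : K}

theorem isTwistInvariant_H1 :
    IsTwistInvariant (H1 (K := K)) 1 1 ∧ IsTwistInvariant (H1 (K := K))ᴴ 1 1 := by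
  simp only [isTwistInvariant_iff]
  constructor <;> intro i j <;> fin_cases i <;> fin_cases j <;> simp [H1, pairSign, pairSwap]

theorem isTwistInvariant_H2 :
    IsTwistInvariant (H2 (K := K)) 1 1 ∧ IsTwistInvariant (H2 (K := K))ᴴ 1 1 := by
  simp only [isTwistInvariant_iff]
  constructor <;> intro i j <;> fin_cases i <;> fin_cases j <;> simp [H2, pairSign, pairSwap]

theorem isTwistInvariant_Epp :
    IsTwistInvariant (Epp (K := K)) u⁻¹ u ∧ IsTwistInvariant (Epp (K := K))ᴴ u u⁻¹ := by
  simp only [isTwistInvariant_iff]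
  constructor <;> intro i j <;> fin_cases i <;> fin_cases j <;> simp [Epp, pairSign, pairSwap]

theorem isTwistInvariant_Epm (hu : star u = u⁻¹) :
    IsTwistInvariant (Epm u) u⁻¹ u⁻¹ ∧ IsTwistInvariant (Epm u)ᴴ u u := by
  simp only [isTwistInvariant_iff]
  constructor <;> intro i j <;> fin_cases i <;> fin_cases j <;>
    simp [Epm, pairSign, pairSwap, hu, mul_comm]

theorem isTwistInvariant_Ep0 (hu0 : u ≠ 0) (hu : star u = u⁻¹) :
    IsTwistInvariant (Ep0 u) u⁻¹ 1 ∧ IsTwistInvariant (Ep0 u)ᴴ u 1 := by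
  simp only [isTwistInvariant_iff]
  constructor <;> intro i j <;> fin_cases i <;> fin_cases j <;>
    simp [Ep0, pairSign, pairSwap, hu, hu0]

theorem isTwistInvariant_E0p (hu0 : u ≠ 0) (hu : star u = u⁻¹) :
    IsTwistInvariant (E0p u) 1 u ∧ IsTwistInvariant (E0p u)ᴴ 1 u⁻¹ := by
  simp only [isTwistInvariant_iff]
  constructor <;> intro i j <;> fin_cases i <;> fin_cases j <;>
    simp [E0p, pairSign, pairSwap, hu, hu0]

end Spinor

namespace Complex

theorem exp_two_pi_I_mul_int_mul_half (θ : ℝ) (n : ℤ) :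
    exp (2 * Real.pi * I * θ * (n * (1/2) : ℝ)) = exp (Real.pi * I * θ) ^ n := by
  rw [← exp_int_mul]
  congr 1
  push_cast
  ring

theorem star_exp_pi_I_mul (θ : ℝ) :
    star (exp (Real.pi * I * θ)) = (exp (Real.pi * I * θ))⁻¹ := by
  rw [star_def, ← exp_conj, ← exp_neg]
  congr 1
  simp [conj_ofReal]

end Complex

/-- For each spinor representation matrix
`Γ ∈ {H₁, H₂, E_{+1,+1}, E_{+1,−1}, E_{+1,0}, E_{0,+1}}` and their adjoints
(with roots `−r`), the identity `Γ̃ᵗ λ^{−r₁H₂} + λ^{r₂H₁} Γ = 0` holds, where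
`Γ̃ = σΓσ⁻¹`, `r` is the corresponding root (`(0,0)` for the `H_j`), and
`λ^{cH_j}` is the diagonal matrix with entries `λ^{c·(H_j)_{aa}}`,
`λ = e^{2πiθ}`, `μ = e^{πiθ}`. -/
theorem stmt_8 (θ : ℝ) (μ : ℂ) (hμ : μ = Complex.exp (Real.pi * Complex.I * θ))
    (lampow : ℝ → ℂ)
    (hlampow : ∀ x : ℝ, lampow x = Complex.exp (2 * Real.pi * Complex.I * θ * x))
    (H1 H2 Epp Epm Ep0 E0p σm : Matrix (Fin 4) (Fin 4) ℂ)
    (hH1 : H1 = (1/2 : ℂ) • Matrix.diagonal ![1, -1, -1, 1])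
    (hH2 : H2 = (1/2 : ℂ) • Matrix.diagonal ![-1, 1, -1, 1])
    (hEpp : Epp = !![0,0,0,0; 0,0,0,0; 0,0,0,-1; 0,0,0,0])
    (hEpm : Epm = !![0,0,0,0; -μ,0,0,0; 0,0,0,0; 0,0,0,0])
    (hEp0 : Ep0 = ((Real.sqrt 2)⁻¹ : ℂ) • !![0,0,0,0; 0,0,0,-1; μ,0,0,0; 0,0,0,0])
    (hE0p : E0p = ((Real.sqrt 2)⁻¹ : ℂ) • !![0,0,0,star μ; 0,0,0,0; 0,1,0,0; 0,0,0,0])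
    (hσ : σm = !![0,-1,0,0; 1,0,0,0; 0,0,0,-1; 0,0,1,0])
    (L1 L2 : ℝ → Matrix (Fin 4) (Fin 4) ℂ)
    (hL1 : ∀ c : ℝ, L1 c = Matrix.diagonal
      ![lampow (c * (1/2)), lampow (-(c * (1/2))),
        lampow (-(c * (1/2))), lampow (c * (1/2))])
    (hL2 : ∀ c : ℝ, L2 c = Matrix.diagonal
      ![lampow (-(c * (1/2))), lampow (c * (1/2)),
        lampow (-(c * (1/2))), lampow (c * (1/2))]) :
    ∀ P ∈ ([(H1, (0:ℝ), (0:ℝ)), (H2, 0, 0),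
            (Epp, 1, 1), (Epm, 1, -1), (Ep0, 1, 0), (E0p, 0, 1),
            (H1ᴴ, 0, 0), (H2ᴴ, 0, 0),
            (Eppᴴ, -1, -1), (Epmᴴ, -1, 1), (Ep0ᴴ, -1, 0), (E0pᴴ, 0, -1)] :
           List (Matrix (Fin 4) (Fin 4) ℂ × ℝ × ℝ)),
      (σm * P.1 * σm⁻¹)ᵀ * L2 (-P.2.1) + L1 P.2.2 * P.1 = 0 := by
  have hμ0 : μ ≠ 0 := hμ ▸ Complex.exp_ne_zero _
  have hstar : star μ = μ⁻¹ := hμ ▸ Complex.star_exp_pi_I_mul θ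
  have hL : ∀ n : ℤ, L1 n = Spinor.lamH1 (μ ^ n) ∧ L2 n = Spinor.lamH2 (μ ^ n) := by
    intro n
    have hpow : ∀ m : ℤ, lampow (m * (1/2)) = μ ^ m := fun m => by
      rw [hlampow, hμ, Complex.exp_two_pi_I_mul_int_mul_half]
    simp only [hL1, hL2, Spinor.lamH1, Spinor.lamH2, ← neg_mul, ← Int.cast_neg, hpow,
      _root_.zpow_neg, and_self]
  obtain ⟨hL1₀, hL2₀⟩ : L1 0 = Spinor.lamH1 1 ∧ L2 0 = Spinor.lamH2 1 := by simpa using hL 0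
  obtain ⟨hL1₁, hL2₁⟩ : L1 1 = Spinor.lamH1 μ ∧ L2 1 = Spinor.lamH2 μ := by simpa using hL 1
  obtain ⟨hL1n, hL2n⟩ : L1 (-1) = Spinor.lamH1 μ⁻¹ ∧ L2 (-1) = Spinor.lamH2 μ⁻¹ := by
    simpa using hL (-1)
  subst hσ hH1 hH2 hEpp hEpm hEp0 hE0p
  intro P hP
  fin_cases hP <;>
    simp only [neg_neg, neg_zero, hL1₀, hL2₀, hL1₁, hL2₁, hL1n, hL2n]
  · exact Spinor.isTwistInvariant_H1.1
  · exact Spinor.isTwistInvariant_H2.1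
  · exact Spinor.isTwistInvariant_Epp.1
  · exact (Spinor.isTwistInvariant_Epm hstar).1
  · exact (Spinor.isTwistInvariant_Ep0 hμ0 hstar).1.smul _
  · exact (Spinor.isTwistInvariant_E0p hμ0 hstar).1.smul _
  · exact Spinor.isTwistInvariant_H1.2
  · exact Spinor.isTwistInvariant_H2.2
  · exact Spinor.isTwistInvariant_Epp.2
  · exact (Spinor.isTwistInvariant_Epm hstar).2
  · rw [conjTranspose_smul]
    exact (Spinor.isTwistInvariant_Ep0 hμ0 hstar).2.smul _
  · rw [conjTranspose_smul]
    exact (Spinor.isTwistInvariant_E0p hμ0 hstar).2.smul _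
end

section
/- In the *-algebra A(S⁷_q) generated by x₁,…,x₄, x̄¹,…,x̄⁴ with the symplectic commutation relations and sphere relation Σ x̄ⁱxᵢ = 1, the 4×2 matrix Ψ with columns |φ₁⟩ = (q⁻³x₁, −q⁻¹x̄², q⁻¹x₃, −x̄⁴)ᵗ and |φ₂⟩ = (q⁻²x₂, q⁻¹x̄¹, −x₄, −x̄³)ᵗ satisfies Ψ*Ψ = 𝕀₂, i.e. ⟨φ₁,φ₁⟩ = ⟨φ₂,φ₂⟩ = 1 and ⟨φ₁,φ₂⟩ = 0. -/
/-! Reordering each `xᵢx̄ⁱ` by the mixed relations turns a diagonal entry of `Ψ*Ψ` into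
`Σ x̄ⁱxᵢ = 1`, the powers of `q⁻¹` cancelling exactly; in the off-diagonal entry the conjugates of
the relations for `x₁x̄²` and `x₃x̄⁴` make all terms cancel in pairs. Only polynomial identities in
`q⁻¹` are involved, so `q⁻¹` is treated as an arbitrary real `t`. -/

namespace QuantumSphere

variable {R : Type*} [Ring R] [StarRing R] [Algebra ℝ R] [StarModule ℝ R]

def braket (ξ η : Fin 4 → R) : R := ∑ j, star (ξ j) * η j

def phi₁ (t : ℝ) (x : Fin 4 → R) : Fin 4 → R :=
  ![t ^ 3 • x 0, -(t • star (x 1)), t • x 2, -star (x 3)]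

def phi₂ (t : ℝ) (x : Fin 4 → R) : Fin 4 → R :=
  ![t ^ 2 • x 1, t • star (x 0), -x 3, -star (x 2)]

lemma braket_phi₁_self (t : ℝ) (x : Fin 4 → R)
    (m22 : x 1 * star (x 1) = star (x 1) * x 1 + (1 - t ^ 2) • (star (x 0) * x 0))
    (m44 : x 3 * star (x 3) = star (x 3) * x 3
      + (1 - t ^ 2) • ((1 + t ^ 4) • (star (x 0) * x 0) + star (x 1) * x 1 + star (x 2) * x 2)) :
    braket (phi₁ t x) (phi₁ t x) = braket x x := by
  simp only [braket, phi₁, Fin.sum_univ_four, Matrix.cons_val, star_smul, star_neg, star_star,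
    star_trivial, neg_mul, mul_neg, neg_neg, smul_mul_assoc, mul_smul_comm, smul_smul]
  rw [m22, m44]
  module

lemma braket_phi₂_self (t : ℝ) (x : Fin 4 → R)
    (m11 : x 0 * star (x 0) = star (x 0) * x 0)
    (m33 : x 2 * star (x 2) = star (x 2) * x 2
      + (1 - t ^ 2) • (star (x 0) * x 0 + (1 + t ^ 2) • (star (x 1) * x 1))) :
    braket (phi₂ t x) (phi₂ t x) = braket x x := by
  simp only [braket, phi₂, Fin.sum_univ_four, Matrix.cons_val, star_smul, star_neg, star_star,
    star_trivial, neg_mul, mul_neg, neg_neg, smul_mul_assoc, mul_smul_comm, smul_smul]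
  rw [m11, m33]
  module

lemma braket_phi₁_phi₂ (t : ℝ) (x : Fin 4 → R)
    (m12 : x 0 * star (x 1) = t • (star (x 1) * x 0))
    (m34 : x 2 * star (x 3) = t • (star (x 3) * x 2) + ((1 - t ^ 2) * t ^ 3) • (star (x 1) * x 0)) :
    braket (phi₁ t x) (phi₂ t x) = 0 := by
  have m12' : x 1 * star (x 0) = t • (star (x 0) * x 1) := by
    simpa only [star_mul, star_star, star_smul, star_trivial] using congrArg star m12
  have m34' : x 3 * star (x 2)
      = t • (star (x 2) * x 3) + ((1 - t ^ 2) * t ^ 3) • (star (x 0) * x 1) := by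
    simpa only [star_mul, star_star, star_smul, star_trivial, star_add] using congrArg star m34
  simp only [braket, phi₁, phi₂, Fin.sum_univ_four, Matrix.cons_val, star_smul, star_neg,
    star_star, star_trivial, neg_mul, mul_neg, neg_neg, smul_mul_assoc, mul_smul_comm, smul_smul]
  rw [m12', m34']
  module

end QuantumSphere

open QuantumSphere in
theorem stmt_15_general (q : ℝ)
    (R : Type*) [Ring R] [StarRing R] [Algebra ℝ R] [StarModule ℝ R]
    (x : Fin 4 → R)
    (m11 : x 0 * star (x 0) = star (x 0) * x 0)
    (m12 : x 0 * star (x 1) = q⁻¹ • (star (x 1) * x 0))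
    (m22 : x 1 * star (x 1) = star (x 1) * x 1 + (1 - q⁻¹ ^ 2) • (star (x 0) * x 0))
    (m33 : x 2 * star (x 2) = star (x 2) * x 2
      + (1 - q⁻¹ ^ 2) • (star (x 0) * x 0 + (1 + q⁻¹ ^ 2) • (star (x 1) * x 1)))
    (m34 : x 2 * star (x 3)
      = q⁻¹ • (star (x 3) * x 2) + ((1 - q⁻¹ ^ 2) * q⁻¹ ^ 3) • (star (x 1) * x 0))
    (m44 : x 3 * star (x 3) = star (x 3) * x 3
      + (1 - q⁻¹ ^ 2) • ((1 + q⁻¹ ^ 4) • (star (x 0) * x 0)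
          + star (x 1) * x 1 + star (x 2) * x 2))
    (hsph : ∑ i, star (x i) * x i = 1)
    (φ₁ φ₂ : Fin 4 → R)
    (hφ₁ : φ₁ = ![q⁻¹ ^ 3 • x 0, -(q⁻¹ • star (x 1)), q⁻¹ • x 2, -star (x 3)])
    (hφ₂ : φ₂ = ![q⁻¹ ^ 2 • x 1, q⁻¹ • star (x 0), -x 3, -star (x 2)]) :
    (∑ j, star (φ₁ j) * φ₁ j) = 1 ∧
    (∑ j, star (φ₂ j) * φ₂ j) = 1 ∧
    (∑ j, star (φ₁ j) * φ₂ j) = 0 := by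
  have hx : braket x x = 1 := hsph
  obtain rfl : φ₁ = phi₁ q⁻¹ x := hφ₁
  obtain rfl : φ₂ = phi₂ q⁻¹ x := hφ₂
  exact ⟨(braket_phi₁_self q⁻¹ x m22 m44).trans hx, (braket_phi₂_self q⁻¹ x m11 m33).trans hx,
    braket_phi₁_phi₂ q⁻¹ x m12 m34⟩

/-- In the `*`-algebra `A(S⁷_q)` generated by `x₁,…,x₄` and their
conjugates `x̄ⁱ = star xᵢ`, with the symplectic commutation relations and the
sphere relation `Σ x̄ⁱxᵢ = 1`, the 4×2 matrix `Ψ` with columns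
`|φ₁⟩ = (q⁻³x₁, −q⁻¹x̄², q⁻¹x₃, −x̄⁴)ᵗ` and `|φ₂⟩ = (q⁻²x₂, q⁻¹x̄¹, −x₄, −x̄³)ᵗ`
satisfies `Ψ*Ψ = 𝕀₂`: `⟨φ₁,φ₁⟩ = ⟨φ₂,φ₂⟩ = 1` and `⟨φ₁,φ₂⟩ = 0`. -/
theorem stmt_15 (q : ℝ) (hq0 : 0 < q) (hq1 : q < 1)
    (R : Type*) [Ring R] [StarRing R] [Algebra ℝ R] [StarModule ℝ R]
    (x : Fin 4 → R)
    (h12 : x 0 * x 1 = q • (x 1 * x 0))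
    (h13 : x 0 * x 2 = q • (x 2 * x 0))
    (h24 : x 1 * x 3 = q • (x 3 * x 1))
    (h34 : x 2 * x 3 = q • (x 3 * x 2))
    (h41 : x 3 * x 0 = q⁻¹ ^ 2 • (x 0 * x 3))
    (h32 : x 2 * x 1 = q⁻¹ ^ 2 • (x 1 * x 2) + (q⁻¹ ^ 2 * (q⁻¹ - q)) • (x 0 * x 3))
    (m11 : x 0 * star (x 0) = star (x 0) * x 0)
    (m12 : x 0 * star (x 1) = q⁻¹ • (star (x 1) * x 0))
    (m13 : x 0 * star (x 2) = q⁻¹ • (star (x 2) * x 0))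
    (m14 : x 0 * star (x 3) = q⁻¹ ^ 2 • (star (x 3) * x 0))
    (m22 : x 1 * star (x 1) = star (x 1) * x 1 + (1 - q⁻¹ ^ 2) • (star (x 0) * x 0))
    (m23 : x 1 * star (x 2) = q⁻¹ ^ 2 • (star (x 2) * x 1))
    (m24 : x 1 * star (x 3)
      = q⁻¹ • (star (x 3) * x 1) + (q⁻¹ * (q⁻¹ ^ 2 - 1)) • (star (x 2) * x 0))
    (m33 : x 2 * star (x 2) = star (x 2) * x 2
      + (1 - q⁻¹ ^ 2) • (star (x 0) * x 0 + (1 + q⁻¹ ^ 2) • (star (x 1) * x 1)))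
    (m34 : x 2 * star (x 3)
      = q⁻¹ • (star (x 3) * x 2) + ((1 - q⁻¹ ^ 2) * q⁻¹ ^ 3) • (star (x 1) * x 0))
    (m44 : x 3 * star (x 3) = star (x 3) * x 3
      + (1 - q⁻¹ ^ 2) • ((1 + q⁻¹ ^ 4) • (star (x 0) * x 0)
          + star (x 1) * x 1 + star (x 2) * x 2))
    (hsph : ∑ i, star (x i) * x i = 1)
    (φ₁ φ₂ : Fin 4 → R)
    (hφ₁ : φ₁ = ![q⁻¹ ^ 3 • x 0, -(q⁻¹ • star (x 1)), q⁻¹ • x 2, -star (x 3)])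
    (hφ₂ : φ₂ = ![q⁻¹ ^ 2 • x 1, q⁻¹ • star (x 0), -x 3, -star (x 2)]) :
    (∑ j, star (φ₁ j) * φ₁ j) = 1 ∧
    (∑ j, star (φ₂ j) * φ₂ j) = 1 ∧
    (∑ j, star (φ₁ j) * φ₂ j) = 0 :=
  stmt_15_general q R x m11 m12 m22 m33 m34 m44 hsph φ₁ φ₂ hφ₁ hφ₂
end

section
/- In A(S⁷_q), the elements t = q⁻²x̄²x₂ + q⁻²x̄¹x₁, a = q⁻⁴x₁x̄³ − q⁻²x₂x̄⁴, b = −q⁻³x₁x₄ − q⁻²x₂x₃ and their conjugates satisfy: ab = q⁴ba, āb = bā, ta = q⁻²at, tb = q⁴bt, together with the sphere relations aā + bb̄ = q⁻²t(1−q⁻²t), q⁴āa + q⁻⁴b̄b = t(1−t), and bb̄ − q⁻⁴b̄b = (1−q⁻⁴)t². -/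
/-!
All seven identities are checked by normal ordering. Used as rewrite rules, the x-x and x-x̄
relations, their adjoints and (for `q ≠ 0`) their inverses bring every monomial to the form
`x̄_{i₁} ⋯ x̄_{iₖ} x_{j₁} ⋯ x_{jₗ}` with decreasing `i`'s and increasing `j`'s, after which the two
sides agree coefficientwise. The sphere relations hold in homogenized form, with the terms linear
in `t` multiplied by `∑ x̄ⁱxᵢ`, which is `1` on the sphere.
-/

theorem mul_mul_eq_of_mul_eq {M : Type*} [Semigroup M] {u v w : M} (h : u * v = w) (z : M) :
    u * (v * z) = w * z := by
  rw [← mul_assoc, h]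

theorem eq_of_forall_mul_eq {M : Type*} [MulOneClass M] {a b : M}
    (h : ∀ z, a * z = b * z) : a = b := by
  simpa using h 1

/-- The x-x and x-x̄ relations of `A(S⁷_q)`; `x i` stands for the paper's `x_{i+1}`. -/
structure SymplecticRelations {R : Type*} [Ring R] [StarRing R] [Algebra ℝ R]
    (q : ℝ) (x : Fin 4 → R) : Prop where
  x0x1 : x 0 * x 1 = q • (x 1 * x 0)
  x0x2 : x 0 * x 2 = q • (x 2 * x 0)
  x1x3 : x 1 * x 3 = q • (x 3 * x 1)
  x2x3 : x 2 * x 3 = q • (x 3 * x 2)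
  x3x0 : x 3 * x 0 = q⁻¹ ^ 2 • (x 0 * x 3)
  x2x1 : x 2 * x 1 = q⁻¹ ^ 2 • (x 1 * x 2) + (q⁻¹ ^ 2 * (q⁻¹ - q)) • (x 0 * x 3)
  x0s0 : x 0 * star (x 0) = star (x 0) * x 0
  x0s1 : x 0 * star (x 1) = q⁻¹ • (star (x 1) * x 0)
  x0s2 : x 0 * star (x 2) = q⁻¹ • (star (x 2) * x 0)
  x0s3 : x 0 * star (x 3) = q⁻¹ ^ 2 • (star (x 3) * x 0)
  x1s1 : x 1 * star (x 1) = star (x 1) * x 1 + (1 - q⁻¹ ^ 2) • (star (x 0) * x 0)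
  x1s2 : x 1 * star (x 2) = q⁻¹ ^ 2 • (star (x 2) * x 1)
  x1s3 : x 1 * star (x 3)
    = q⁻¹ • (star (x 3) * x 1) + (q⁻¹ * (q⁻¹ ^ 2 - 1)) • (star (x 2) * x 0)
  x2s2 : x 2 * star (x 2) = star (x 2) * x 2
    + (1 - q⁻¹ ^ 2) • (star (x 0) * x 0 + (1 + q⁻¹ ^ 2) • (star (x 1) * x 1))
  x2s3 : x 2 * star (x 3)
    = q⁻¹ • (star (x 3) * x 2) + ((1 - q⁻¹ ^ 2) * q⁻¹ ^ 3) • (star (x 1) * x 0)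
  x3s3 : x 3 * star (x 3) = star (x 3) * x 3
    + (1 - q⁻¹ ^ 2) • ((1 + q⁻¹ ^ 4) • (star (x 0) * x 0)
        + star (x 1) * x 1 + star (x 2) * x 2)

section

variable {R : Type*} [Ring R] [StarRing R] [Algebra ℝ R]

noncomputable def fourSphereT (q : ℝ) (x : Fin 4 → R) : R :=
  q⁻¹ ^ 2 • (star (x 1) * x 1) + q⁻¹ ^ 2 • (star (x 0) * x 0)

noncomputable def fourSphereA (q : ℝ) (x : Fin 4 → R) : R :=
  q⁻¹ ^ 4 • (x 0 * star (x 2)) - q⁻¹ ^ 2 • (x 1 * star (x 3))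

noncomputable def fourSphereB (q : ℝ) (x : Fin 4 → R) : R :=
  -(q⁻¹ ^ 3 • (x 0 * x 3)) - q⁻¹ ^ 2 • (x 1 * x 2)

namespace SymplecticRelations

variable {q : ℝ} {x : Fin 4 → R}

theorem x1x0 (hS : SymplecticRelations q x) (hq : q ≠ 0) : x 1 * x 0 = q⁻¹ • (x 0 * x 1) :=
  (eq_inv_smul_iff₀ hq).2 hS.x0x1.symm

theorem x2x0 (hS : SymplecticRelations q x) (hq : q ≠ 0) : x 2 * x 0 = q⁻¹ • (x 0 * x 2) :=
  (eq_inv_smul_iff₀ hq).2 hS.x0x2.symm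

theorem x3x1 (hS : SymplecticRelations q x) (hq : q ≠ 0) : x 3 * x 1 = q⁻¹ • (x 1 * x 3) :=
  (eq_inv_smul_iff₀ hq).2 hS.x1x3.symm

theorem x3x2 (hS : SymplecticRelations q x) (hq : q ≠ 0) : x 3 * x 2 = q⁻¹ • (x 2 * x 3) :=
  (eq_inv_smul_iff₀ hq).2 hS.x2x3.symm

variable [StarModule ℝ R]

theorem s0s1 (hS : SymplecticRelations q x) (hq : q ≠ 0) :
    star (x 0) * star (x 1) = q⁻¹ • (star (x 1) * star (x 0)) :=
  (eq_inv_smul_iff₀ hq).2 (by simpa using congrArg star hS.x0x1.symm)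

theorem s0s2 (hS : SymplecticRelations q x) (hq : q ≠ 0) :
    star (x 0) * star (x 2) = q⁻¹ • (star (x 2) * star (x 0)) :=
  (eq_inv_smul_iff₀ hq).2 (by simpa using congrArg star hS.x0x2.symm)

theorem s1s3 (hS : SymplecticRelations q x) (hq : q ≠ 0) :
    star (x 1) * star (x 3) = q⁻¹ • (star (x 3) * star (x 1)) :=
  (eq_inv_smul_iff₀ hq).2 (by simpa using congrArg star hS.x1x3.symm)

theorem s0s3 (hS : SymplecticRelations q x) :
    star (x 0) * star (x 3) = q⁻¹ ^ 2 • (star (x 3) * star (x 0)) := by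
  simpa using congrArg star hS.x3x0

theorem s1s2 (hS : SymplecticRelations q x) :
    star (x 1) * star (x 2) = q⁻¹ ^ 2 • (star (x 2) * star (x 1))
      + (q⁻¹ ^ 2 * (q⁻¹ - q)) • (star (x 3) * star (x 0)) := by
  simpa using congrArg star hS.x2x1

theorem x1s0 (hS : SymplecticRelations q x) : x 1 * star (x 0) = q⁻¹ • (star (x 0) * x 1) := by
  simpa using congrArg star hS.x0s1

theorem x2s0 (hS : SymplecticRelations q x) : x 2 * star (x 0) = q⁻¹ • (star (x 0) * x 2) := by
  simpa using congrArg star hS.x0s2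

theorem x3s0 (hS : SymplecticRelations q x) :
    x 3 * star (x 0) = q⁻¹ ^ 2 • (star (x 0) * x 3) := by
  simpa using congrArg star hS.x0s3

theorem x2s1 (hS : SymplecticRelations q x) :
    x 2 * star (x 1) = q⁻¹ ^ 2 • (star (x 1) * x 2) := by
  simpa using congrArg star hS.x1s2

theorem x3s1 (hS : SymplecticRelations q x) : x 3 * star (x 1)
    = q⁻¹ • (star (x 1) * x 3) + (q⁻¹ * (q⁻¹ ^ 2 - 1)) • (star (x 0) * x 2) := by
  simpa using congrArg star hS.x1s3

theorem x3s2 (hS : SymplecticRelations q x) : x 3 * star (x 2)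
    = q⁻¹ • (star (x 2) * x 3) + ((1 - q⁻¹ ^ 2) * q⁻¹ ^ 3) • (star (x 0) * x 1) := by
  simpa using congrArg star hS.x2s3

set_option maxHeartbeats 4000000 in
theorem fourSphere_relations (hS : SymplecticRelations q x) (hq : q ≠ 0) :
    let t := fourSphereT q x
    let a := fourSphereA q x
    let b := fourSphereB q x
    a * b = q ^ 4 • (b * a) ∧
    star a * b = b * star a ∧
    t * a = q⁻¹ ^ 2 • (a * t) ∧
    t * b = q ^ 4 • (b * t) ∧
    a * star a + b * star b = q⁻¹ ^ 2 • (t * ∑ i, star (x i) * x i) - q⁻¹ ^ 4 • (t * t) ∧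
    q ^ 4 • (star a * a) + q⁻¹ ^ 4 • (star b * b) = t * ∑ i, star (x i) * x i - t * t ∧
    b * star b - q⁻¹ ^ 4 • (star b * b) = (1 - q⁻¹ ^ 4) • (t * t) := by
  intro t a b
  refine ⟨?_, ?_, ?_, ?_, ?_, ?_, ?_⟩
  all_goals
    -- every monomial then ends in `z`, so each relation is needed only as `u * (v * z) = w * z`
    refine eq_of_forall_mul_eq fun z => ?_
    simp only [t, a, b, fourSphereT, fourSphereA, fourSphereB, Fin.sum_univ_four,
      star_add, star_neg, star_smul, star_mul, star_star, star_trivial,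
      mul_add, add_mul, mul_neg, neg_mul, smul_add, smul_neg, neg_neg,
      smul_smul, smul_mul_assoc, mul_smul_comm, mul_assoc, sub_eq_add_neg, neg_add,
      mul_mul_eq_of_mul_eq (hS.x1x0 hq), mul_mul_eq_of_mul_eq (hS.x2x0 hq),
      mul_mul_eq_of_mul_eq (hS.x3x1 hq), mul_mul_eq_of_mul_eq (hS.x3x2 hq),
      mul_mul_eq_of_mul_eq hS.x3x0, mul_mul_eq_of_mul_eq hS.x2x1,
      mul_mul_eq_of_mul_eq (hS.s0s1 hq), mul_mul_eq_of_mul_eq (hS.s0s2 hq),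
      mul_mul_eq_of_mul_eq (hS.s1s3 hq), mul_mul_eq_of_mul_eq hS.s0s3,
      mul_mul_eq_of_mul_eq hS.s1s2,
      mul_mul_eq_of_mul_eq hS.x0s0, mul_mul_eq_of_mul_eq hS.x0s1, mul_mul_eq_of_mul_eq hS.x0s2,
      mul_mul_eq_of_mul_eq hS.x0s3, mul_mul_eq_of_mul_eq hS.x1s1, mul_mul_eq_of_mul_eq hS.x1s2,
      mul_mul_eq_of_mul_eq hS.x1s3, mul_mul_eq_of_mul_eq hS.x2s2, mul_mul_eq_of_mul_eq hS.x2s3,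
      mul_mul_eq_of_mul_eq hS.x3s3,
      mul_mul_eq_of_mul_eq hS.x1s0, mul_mul_eq_of_mul_eq hS.x2s0, mul_mul_eq_of_mul_eq hS.x3s0,
      mul_mul_eq_of_mul_eq hS.x2s1, mul_mul_eq_of_mul_eq hS.x3s1, mul_mul_eq_of_mul_eq hS.x3s2]
    match_scalars <;> field_simp <;> ring

end SymplecticRelations

end

theorem stmt_16_general (q : ℝ) (hq0 : 0 < q)
    (R : Type*) [Ring R] [StarRing R] [Algebra ℝ R] [StarModule ℝ R]
    (x : Fin 4 → R)
    (h12 : x 0 * x 1 = q • (x 1 * x 0))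
    (h13 : x 0 * x 2 = q • (x 2 * x 0))
    (h24 : x 1 * x 3 = q • (x 3 * x 1))
    (h34 : x 2 * x 3 = q • (x 3 * x 2))
    (h41 : x 3 * x 0 = q⁻¹ ^ 2 • (x 0 * x 3))
    (h32 : x 2 * x 1 = q⁻¹ ^ 2 • (x 1 * x 2) + (q⁻¹ ^ 2 * (q⁻¹ - q)) • (x 0 * x 3))
    (m11 : x 0 * star (x 0) = star (x 0) * x 0)
    (m12 : x 0 * star (x 1) = q⁻¹ • (star (x 1) * x 0))
    (m13 : x 0 * star (x 2) = q⁻¹ • (star (x 2) * x 0))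
    (m14 : x 0 * star (x 3) = q⁻¹ ^ 2 • (star (x 3) * x 0))
    (m22 : x 1 * star (x 1) = star (x 1) * x 1 + (1 - q⁻¹ ^ 2) • (star (x 0) * x 0))
    (m23 : x 1 * star (x 2) = q⁻¹ ^ 2 • (star (x 2) * x 1))
    (m24 : x 1 * star (x 3)
      = q⁻¹ • (star (x 3) * x 1) + (q⁻¹ * (q⁻¹ ^ 2 - 1)) • (star (x 2) * x 0))
    (m33 : x 2 * star (x 2) = star (x 2) * x 2
      + (1 - q⁻¹ ^ 2) • (star (x 0) * x 0 + (1 + q⁻¹ ^ 2) • (star (x 1) * x 1)))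
    (m34 : x 2 * star (x 3)
      = q⁻¹ • (star (x 3) * x 2) + ((1 - q⁻¹ ^ 2) * q⁻¹ ^ 3) • (star (x 1) * x 0))
    (m44 : x 3 * star (x 3) = star (x 3) * x 3
      + (1 - q⁻¹ ^ 2) • ((1 + q⁻¹ ^ 4) • (star (x 0) * x 0)
          + star (x 1) * x 1 + star (x 2) * x 2))
    (hsph : ∑ i, star (x i) * x i = 1)
    (t a b : R)
    (ht : t = q⁻¹ ^ 2 • (star (x 1) * x 1) + q⁻¹ ^ 2 • (star (x 0) * x 0))
    (ha : a = q⁻¹ ^ 4 • (x 0 * star (x 2)) - q⁻¹ ^ 2 • (x 1 * star (x 3)))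
    (hb : b = -(q⁻¹ ^ 3 • (x 0 * x 3)) - q⁻¹ ^ 2 • (x 1 * x 2)) :
    a * b = q ^ 4 • (b * a) ∧
    star a * b = b * star a ∧
    t * a = q⁻¹ ^ 2 • (a * t) ∧
    t * b = q ^ 4 • (b * t) ∧
    a * star a + b * star b = q⁻¹ ^ 2 • t - q⁻¹ ^ 4 • (t * t) ∧
    q ^ 4 • (star a * a) + q⁻¹ ^ 4 • (star b * b) = t - t * t ∧
    b * star b - q⁻¹ ^ 4 • (star b * b) = (1 - q⁻¹ ^ 4) • (t * t) := by
  have hS : SymplecticRelations q x :=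
    ⟨h12, h13, h24, h34, h41, h32, m11, m12, m13, m14, m22, m23, m24, m33, m34, m44⟩
  obtain ⟨hab, hab', hta, htb, hsph₁, hsph₂, hbb⟩ := hS.fourSphere_relations hq0.ne'
  rw [hsph, mul_one] at hsph₁ hsph₂
  subst ht ha hb
  exact ⟨hab, hab', hta, htb, hsph₁, hsph₂, hbb⟩

/-- In `A(S⁷_q)`, the elements `t = q⁻²x̄²x₂ + q⁻²x̄¹x₁`,
`a = q⁻⁴x₁x̄³ − q⁻²x₂x̄⁴`, `b = −q⁻³x₁x₄ − q⁻²x₂x₃` satisfy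
`ab = q⁴ba`, `āb = bā`, `ta = q⁻²at`, `tb = q⁴bt`, the sphere relations
`aā + bb̄ = q⁻²t(1−q⁻²t)`, `q⁴āa + q⁻⁴b̄b = t(1−t)`, and
`bb̄ − q⁻⁴b̄b = (1−q⁻⁴)t²`. -/
theorem stmt_16 (q : ℝ) (hq0 : 0 < q) (hq1 : q < 1)
    (R : Type*) [Ring R] [StarRing R] [Algebra ℝ R] [StarModule ℝ R]
    (x : Fin 4 → R)
    (h12 : x 0 * x 1 = q • (x 1 * x 0))
    (h13 : x 0 * x 2 = q • (x 2 * x 0))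
    (h24 : x 1 * x 3 = q • (x 3 * x 1))
    (h34 : x 2 * x 3 = q • (x 3 * x 2))
    (h41 : x 3 * x 0 = q⁻¹ ^ 2 • (x 0 * x 3))
    (h32 : x 2 * x 1 = q⁻¹ ^ 2 • (x 1 * x 2) + (q⁻¹ ^ 2 * (q⁻¹ - q)) • (x 0 * x 3))
    (m11 : x 0 * star (x 0) = star (x 0) * x 0)
    (m12 : x 0 * star (x 1) = q⁻¹ • (star (x 1) * x 0))
    (m13 : x 0 * star (x 2) = q⁻¹ • (star (x 2) * x 0))
    (m14 : x 0 * star (x 3) = q⁻¹ ^ 2 • (star (x 3) * x 0))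
    (m22 : x 1 * star (x 1) = star (x 1) * x 1 + (1 - q⁻¹ ^ 2) • (star (x 0) * x 0))
    (m23 : x 1 * star (x 2) = q⁻¹ ^ 2 • (star (x 2) * x 1))
    (m24 : x 1 * star (x 3)
      = q⁻¹ • (star (x 3) * x 1) + (q⁻¹ * (q⁻¹ ^ 2 - 1)) • (star (x 2) * x 0))
    (m33 : x 2 * star (x 2) = star (x 2) * x 2
      + (1 - q⁻¹ ^ 2) • (star (x 0) * x 0 + (1 + q⁻¹ ^ 2) • (star (x 1) * x 1)))
    (m34 : x 2 * star (x 3)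
      = q⁻¹ • (star (x 3) * x 2) + ((1 - q⁻¹ ^ 2) * q⁻¹ ^ 3) • (star (x 1) * x 0))
    (m44 : x 3 * star (x 3) = star (x 3) * x 3
      + (1 - q⁻¹ ^ 2) • ((1 + q⁻¹ ^ 4) • (star (x 0) * x 0)
          + star (x 1) * x 1 + star (x 2) * x 2))
    (hsph : ∑ i, star (x i) * x i = 1)
    (t a b : R)
    (ht : t = q⁻¹ ^ 2 • (star (x 1) * x 1) + q⁻¹ ^ 2 • (star (x 0) * x 0))
    (ha : a = q⁻¹ ^ 4 • (x 0 * star (x 2)) - q⁻¹ ^ 2 • (x 1 * star (x 3)))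
    (hb : b = -(q⁻¹ ^ 3 • (x 0 * x 3)) - q⁻¹ ^ 2 • (x 1 * x 2)) :
    a * b = q ^ 4 • (b * a) ∧
    star a * b = b * star a ∧
    t * a = q⁻¹ ^ 2 • (a * t) ∧
    t * b = q ^ 4 • (b * t) ∧
    a * star a + b * star b = q⁻¹ ^ 2 • t - q⁻¹ ^ 4 • (t * t) ∧
    q ^ 4 • (star a * a) + q⁻¹ ^ 4 • (star b * b) = t - t * t ∧
    b * star b - q⁻¹ ^ 4 • (star b * b) = (1 - q⁻¹ ^ 4) • (t * t) :=
  stmt_16_general q hq0 R x h12 h13 h24 h34 h41 h32 m11 m12 m13 m14 m22 m23 m24 m33 m34 m44 hsph t a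
    b ht ha hb
end

section
/- In the infinite-dimensional *-representation σ of A(S⁴_q) on ℓ²(ℕ×ℕ) defined by t|m,n⟩ = q^{2m+4n+4}|m,n⟩, ā|m,n⟩ = (1−q^{2m+2})^{1/2}q^{m+2n+1}|m+1,n⟩, a|m,n⟩ = (1−q^{2m})^{1/2}q^{m+2n}|m−1,n⟩, b|m,n⟩ = (1−q^{4n+4})^{1/2}q^{2(m+n+2)}|m,n+1⟩, b̄|m,n⟩ = (1−q^{4n})^{1/2}q^{2(m+n+1)}|m,n−1⟩ (with 0 < q < 1), all defining relations of A(S⁴_q) are satisfied: ab = q⁴ba, āb = bā, ta = q⁻²at, tb = q⁴bt, aā+bb̄ = q⁻²t(1−q⁻²t), q⁴āa+q⁻⁴b̄b = t(1−t), bb̄−q⁻⁴b̄b = (1−q⁻⁴)t². -/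
/-!
Each of the five operators is a weighted shift on the basis `|m,n⟩`: it sends every basis
vector to a multiple of a single basis vector. Compositions, scalar multiples and sums of
weighted shifts are again weighted shifts, so every relation reduces to an identity between
weights at one basis vector. For the commutation relations this is bookkeeping of exponents;
for the quadratic ones the square roots cancel in pairs, `√(1 - q^k)² = 1 - q^k`, and the
lowering operators `a`, `b̄` contribute the factor `√(1 - q^0) = 0` on `|0,n⟩`, `|m,0⟩`.
-/

open Finsupp

section WeightedShift

variable {ι R : Type*} [CommRing R]

def IsWeightedShift (f : (ι →₀ R) →ₗ[R] ι →₀ R) (w : ι → R) (s : ι → ι) : Prop :=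
  ∀ i, f (single i 1) = w i • single (s i) 1

namespace IsWeightedShift

variable {f g : (ι →₀ R) →ₗ[R] ι →₀ R} {w v : ι → R} {s r : ι → ι}

theorem comp (hf : IsWeightedShift f w s) (hg : IsWeightedShift g v r) :
    IsWeightedShift (g ∘ₗ f) (fun i => w i * v (s i)) (r ∘ s) := fun i => by
  rw [LinearMap.comp_apply, hf, map_smul, hg, smul_smul, Function.comp_apply]

theorem smul (hf : IsWeightedShift f w s) (c : R) :
    IsWeightedShift (c • f) (fun i => c * w i) s := fun i => by
  rw [LinearMap.smul_apply, hf, smul_smul]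

theorem add (hf : IsWeightedShift f w s) (hg : IsWeightedShift g v s) :
    IsWeightedShift (f + g) (fun i => w i + v i) s := fun i => by
  rw [LinearMap.add_apply, hf, hg, add_smul]

theorem sub (hf : IsWeightedShift f w s) (hg : IsWeightedShift g v s) :
    IsWeightedShift (f - g) (fun i => w i - v i) s := fun i => by
  rw [LinearMap.sub_apply, hf, hg, sub_smul]

theorem congr {w' : ι → R} {s' : ι → ι} (hf : IsWeightedShift f w s) (hw : ∀ i, w i = w' i)
    (hs : ∀ i, w i ≠ 0 → s i = s' i) : IsWeightedShift f w' s' := fun i => by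
  rcases eq_or_ne (w i) 0 with h | h
  · rw [hf, ← hw, h, zero_smul, zero_smul]
  · rw [hf, hw, hs i h]

theorem ext (hf : IsWeightedShift f w s) (hg : IsWeightedShift g v s) (h : ∀ i, w i = v i) :
    f = g :=
  Finsupp.basisSingleOne.ext fun i => by rw [coe_basisSingleOne, hf, hg, h]

end IsWeightedShift

end WeightedShift

theorem sqrt_one_sub_pow_mul_self {q : ℝ} (hq0 : 0 ≤ q) (hq1 : q ≤ 1) (k : ℕ) :
    √(1 - q ^ k) * √(1 - q ^ k) = 1 - q ^ k :=
  Real.mul_self_sqrt (sub_nonneg.2 (pow_le_one₀ hq0 hq1))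

noncomputable section

namespace QuantumFourSphere

variable (q : ℝ)

def weightT (p : ℕ × ℕ) : ℝ := q ^ (2 * p.1 + 4 * p.2 + 4)

def weightA (p : ℕ × ℕ) : ℝ := √(1 - q ^ (2 * p.1)) * q ^ (p.1 + 2 * p.2)

def weightAbar (p : ℕ × ℕ) : ℝ := √(1 - q ^ (2 * p.1 + 2)) * q ^ (p.1 + 2 * p.2 + 1)

def weightB (p : ℕ × ℕ) : ℝ := √(1 - q ^ (4 * p.2 + 4)) * q ^ (2 * (p.1 + p.2 + 2))

def weightBbar (p : ℕ × ℕ) : ℝ := √(1 - q ^ (4 * p.2)) * q ^ (2 * (p.1 + p.2 + 1))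

/- The lowering shifts use truncated subtraction: their value at `m = 0` (resp. `n = 0`) is
irrelevant because `weightA` (resp. `weightBbar`) vanishes there. -/
structure IsSigma (T Aop Abar Bop Bbar : (ℕ × ℕ →₀ ℂ) →ₗ[ℂ] ℕ × ℕ →₀ ℂ) : Prop where
  t : IsWeightedShift T (fun p => (weightT q p : ℂ)) id
  a : IsWeightedShift Aop (fun p => (weightA q p : ℂ)) fun p => (p.1 - 1, p.2)
  abar : IsWeightedShift Abar (fun p => (weightAbar q p : ℂ)) fun p => (p.1 + 1, p.2)
  b : IsWeightedShift Bop (fun p => (weightB q p : ℂ)) fun p => (p.1, p.2 + 1)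
  bbar : IsWeightedShift Bbar (fun p => (weightBbar q p : ℂ)) fun p => (p.1, p.2 - 1)

namespace IsSigma

variable {q} {T Aop Abar Bop Bbar : (ℕ × ℕ →₀ ℂ) →ₗ[ℂ] ℕ × ℕ →₀ ℂ}

theorem a_comp_b (hσ : IsSigma q T Aop Abar Bop Bbar) :
    Aop ∘ₗ Bop = (q : ℂ) ^ 4 • (Bop ∘ₗ Aop) :=
  (hσ.b.comp hσ.a).ext ((hσ.a.comp hσ.b).smul _) fun
    | (0, n) => by simp [weightA]
    | (m + 1, n) => by simp only [weightA, weightB, Nat.add_sub_cancel]; push_cast; ring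

theorem abar_comp_b (hσ : IsSigma q T Aop Abar Bop Bbar) : Abar ∘ₗ Bop = Bop ∘ₗ Abar :=
  (hσ.b.comp hσ.abar).ext (hσ.abar.comp hσ.b) fun p => by
    simp only [weightAbar, weightB]; push_cast; ring

theorem t_comp_a (hσ : IsSigma q T Aop Abar Bop Bbar) (hq : q ≠ 0) :
    T ∘ₗ Aop = (q : ℂ)⁻¹ ^ 2 • (Aop ∘ₗ T) :=
  (hσ.a.comp hσ.t).ext ((hσ.t.comp hσ.a).smul _) fun
    | (0, n) => by simp [weightA]
    | (m + 1, n) => by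
      have := Complex.ofReal_ne_zero.2 hq
      simp only [weightA, weightT, Nat.add_sub_cancel, id]; push_cast; field_simp; ring

theorem t_comp_b (hσ : IsSigma q T Aop Abar Bop Bbar) :
    T ∘ₗ Bop = (q : ℂ) ^ 4 • (Bop ∘ₗ T) :=
  (hσ.b.comp hσ.t).ext ((hσ.t.comp hσ.b).smul _) fun p => by
    simp only [weightB, weightT, id]; push_cast; ring

theorem isWeightedShift_a_comp_abar (hσ : IsSigma q T Aop Abar Bop Bbar) (hq0 : 0 ≤ q)
    (hq1 : q ≤ 1) :
    IsWeightedShift (Aop ∘ₗ Abar)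
      (fun p => (((1 - q ^ (2 * p.1 + 2)) * q ^ (2 * p.1 + 4 * p.2 + 2) : ℝ) : ℂ)) id :=
  (hσ.abar.comp hσ.a).congr
    (fun p => by
      have : 2 * (p.1 + 1) = 2 * p.1 + 2 := by ring
      norm_cast
      simp only [weightAbar, weightA, this]
      rw [mul_mul_mul_comm, sqrt_one_sub_pow_mul_self hq0 hq1]; ring)
    fun p _ => by simp

theorem isWeightedShift_abar_comp_a (hσ : IsSigma q T Aop Abar Bop Bbar) (hq0 : 0 ≤ q)
    (hq1 : q ≤ 1) :
    IsWeightedShift (Abar ∘ₗ Aop)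
      (fun p => (((1 - q ^ (2 * p.1)) * q ^ (2 * p.1 + 4 * p.2) : ℝ) : ℂ)) id :=
  (hσ.a.comp hσ.abar).congr
    (fun
      | (0, n) => by simp [weightA]
      | (m + 1, n) => by
        have : 2 * (m + 1) = 2 * m + 2 := by ring
        norm_cast
        simp only [weightAbar, weightA, Nat.add_sub_cancel, this]
        rw [mul_mul_mul_comm, sqrt_one_sub_pow_mul_self hq0 hq1]; ring)
    fun
      | (0, n), h => by simp [weightA] at h
      | (m + 1, n), _ => by simp

theorem isWeightedShift_b_comp_bbar (hσ : IsSigma q T Aop Abar Bop Bbar) (hq0 : 0 ≤ q)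
    (hq1 : q ≤ 1) :
    IsWeightedShift (Bop ∘ₗ Bbar)
      (fun p => (((1 - q ^ (4 * p.2)) * q ^ (4 * (p.1 + p.2 + 1)) : ℝ) : ℂ)) id :=
  (hσ.bbar.comp hσ.b).congr
    (fun
      | (m, 0) => by simp [weightBbar]
      | (m, n + 1) => by
        have : 4 * (n + 1) = 4 * n + 4 := by ring
        norm_cast
        simp only [weightBbar, weightB, Nat.add_sub_cancel, this]
        rw [mul_mul_mul_comm, sqrt_one_sub_pow_mul_self hq0 hq1]; ring)
    fun
      | (m, 0), h => by simp [weightBbar] at h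
      | (m, n + 1), _ => by simp

theorem isWeightedShift_bbar_comp_b (hσ : IsSigma q T Aop Abar Bop Bbar) (hq0 : 0 ≤ q)
    (hq1 : q ≤ 1) :
    IsWeightedShift (Bbar ∘ₗ Bop)
      (fun p => (((1 - q ^ (4 * p.2 + 4)) * q ^ (4 * (p.1 + p.2 + 2)) : ℝ) : ℂ)) id :=
  (hσ.b.comp hσ.bbar).congr
    (fun p => by
      have : 4 * (p.2 + 1) = 4 * p.2 + 4 := by ring
      norm_cast
      simp only [weightB, weightBbar, this]
      rw [mul_mul_mul_comm, sqrt_one_sub_pow_mul_self hq0 hq1]; ring)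
    fun p _ => by simp

theorem a_comp_abar_add_b_comp_bbar (hσ : IsSigma q T Aop Abar Bop Bbar) (hq0 : 0 < q)
    (hq1 : q ≤ 1) :
    Aop ∘ₗ Abar + Bop ∘ₗ Bbar = (q : ℂ)⁻¹ ^ 2 • T - (q : ℂ)⁻¹ ^ 4 • (T ∘ₗ T) :=
  ((hσ.isWeightedShift_a_comp_abar hq0.le hq1).add
      (hσ.isWeightedShift_b_comp_bbar hq0.le hq1)).ext
    ((hσ.t.smul _).sub ((hσ.t.comp hσ.t).smul _)) fun p => by
      have := Complex.ofReal_ne_zero.2 hq0.ne'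
      simp only [weightT, id]; push_cast; field_simp; ring

theorem abar_comp_a_add_bbar_comp_b (hσ : IsSigma q T Aop Abar Bop Bbar) (hq0 : 0 < q)
    (hq1 : q ≤ 1) :
    (q : ℂ) ^ 4 • (Abar ∘ₗ Aop) + (q : ℂ)⁻¹ ^ 4 • (Bbar ∘ₗ Bop) = T - T ∘ₗ T :=
  (((hσ.isWeightedShift_abar_comp_a hq0.le hq1).smul _).add
      ((hσ.isWeightedShift_bbar_comp_b hq0.le hq1).smul _)).ext
    (hσ.t.sub (hσ.t.comp hσ.t)) fun p => by
      have := Complex.ofReal_ne_zero.2 hq0.ne'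
      simp only [weightT, id]; push_cast; field_simp; ring

theorem b_comp_bbar_sub_bbar_comp_b (hσ : IsSigma q T Aop Abar Bop Bbar) (hq0 : 0 < q)
    (hq1 : q ≤ 1) :
    Bop ∘ₗ Bbar - (q : ℂ)⁻¹ ^ 4 • (Bbar ∘ₗ Bop) = (1 - (q : ℂ)⁻¹ ^ 4) • (T ∘ₗ T) :=
  ((hσ.isWeightedShift_b_comp_bbar hq0.le hq1).sub
      ((hσ.isWeightedShift_bbar_comp_b hq0.le hq1).smul _)).ext
    ((hσ.t.comp hσ.t).smul _) fun p => by
      have := Complex.ofReal_ne_zero.2 hq0.ne'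
      simp only [weightT, id]; push_cast; field_simp; ring

end IsSigma

end QuantumFourSphere

end

/-- In the infinite-dimensional `*`-representation `σ` of `A(S⁴_q)`
on `ℓ²(ℕ×ℕ)` (here presented on the span of the orthonormal basis `|m,n⟩`,
modelled as finitely supported functions) defined by
`t|m,n⟩ = q^{2m+4n+4}|m,n⟩`,
`ā|m,n⟩ = (1−q^{2m+2})^{1/2} q^{m+2n+1} |m+1,n⟩`,
`a|m,n⟩ = (1−q^{2m})^{1/2} q^{m+2n} |m−1,n⟩`,
`b|m,n⟩ = (1−q^{4n+4})^{1/2} q^{2(m+n+2)} |m,n+1⟩`,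
`b̄|m,n⟩ = (1−q^{4n})^{1/2} q^{2(m+n+1)} |m,n−1⟩` (with `0 < q < 1`),
all defining relations of `A(S⁴_q)` are satisfied. -/
theorem stmt_17 (q : ℝ) (hq0 : 0 < q) (hq1 : q < 1)
    (T Aop Abar Bop Bbar : (ℕ × ℕ →₀ ℂ) →ₗ[ℂ] (ℕ × ℕ →₀ ℂ))
    (hT : ∀ m n : ℕ, T (Finsupp.single (m, n) 1)
      = ((q ^ (2*m + 4*n + 4) : ℝ) : ℂ) • Finsupp.single (m, n) 1)
    (hAbar : ∀ m n : ℕ, Abar (Finsupp.single (m, n) 1)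
      = ((Real.sqrt (1 - q ^ (2*m + 2)) * q ^ (m + 2*n + 1) : ℝ) : ℂ) •
          Finsupp.single (m + 1, n) 1)
    (hA0 : ∀ n : ℕ, Aop (Finsupp.single (0, n) 1) = 0)
    (hA : ∀ m n : ℕ, Aop (Finsupp.single (m + 1, n) 1)
      = ((Real.sqrt (1 - q ^ (2*(m + 1))) * q ^ ((m + 1) + 2*n) : ℝ) : ℂ) •
          Finsupp.single (m, n) 1)
    (hB : ∀ m n : ℕ, Bop (Finsupp.single (m, n) 1)
      = ((Real.sqrt (1 - q ^ (4*n + 4)) * q ^ (2*(m + n + 2)) : ℝ) : ℂ) •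
          Finsupp.single (m, n + 1) 1)
    (hBbar0 : ∀ m : ℕ, Bbar (Finsupp.single (m, 0) 1) = 0)
    (hBbar : ∀ m n : ℕ, Bbar (Finsupp.single (m, n + 1) 1)
      = ((Real.sqrt (1 - q ^ (4*(n + 1))) * q ^ (2*(m + (n + 1) + 1)) : ℝ) : ℂ) •
          Finsupp.single (m, n) 1) :
    Aop ∘ₗ Bop = ((q : ℂ) ^ 4) • (Bop ∘ₗ Aop) ∧
    Abar ∘ₗ Bop = Bop ∘ₗ Abar ∧
    T ∘ₗ Aop = ((q : ℂ)⁻¹ ^ 2) • (Aop ∘ₗ T) ∧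
    T ∘ₗ Bop = ((q : ℂ) ^ 4) • (Bop ∘ₗ T) ∧
    Aop ∘ₗ Abar + Bop ∘ₗ Bbar = ((q : ℂ)⁻¹ ^ 2) • T - ((q : ℂ)⁻¹ ^ 4) • (T ∘ₗ T) ∧
    ((q : ℂ) ^ 4) • (Abar ∘ₗ Aop) + ((q : ℂ)⁻¹ ^ 4) • (Bbar ∘ₗ Bop)
      = T - T ∘ₗ T ∧
    Bop ∘ₗ Bbar - ((q : ℂ)⁻¹ ^ 4) • (Bbar ∘ₗ Bop)
      = (1 - (q : ℂ)⁻¹ ^ 4) • (T ∘ₗ T) := by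
  have hσ : QuantumFourSphere.IsSigma q T Aop Abar Bop Bbar :=
    { t := fun p => hT p.1 p.2
      a := fun
        | (0, n) => by simp [hA0, QuantumFourSphere.weightA]
        | (m + 1, n) => hA m n
      abar := fun p => hAbar p.1 p.2
      b := fun p => hB p.1 p.2
      bbar := fun
        | (m, 0) => by simp [hBbar0, QuantumFourSphere.weightBbar]
        | (m, n + 1) => hBbar m n }
  exact ⟨hσ.a_comp_b, hσ.abar_comp_b, hσ.t_comp_a hq0.ne', hσ.t_comp_b,
    hσ.a_comp_abar_add_b_comp_bbar hq0 hq1.le, hσ.abar_comp_a_add_bbar_comp_b hq0 hq1.le,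
    hσ.b_comp_bbar_sub_bbar_comp_b hq0 hq1.le⟩
end

section
/- For 0 < q < 1, the trace of the operator σ(t) in the representation σ (t|m,n⟩ = q^{2m+4n+4}|m,n⟩) equals q⁴/((1−q²)(1−q⁴)). Consequently the index pairing ⟨[μ],[p]⟩ = −q⁻⁴(1−q²)(1−q⁴)·Tr(σ(t)) equals −1. -/
/-- For `0 < q < 1`, the trace of `σ(t)` (with
`t|m,n⟩ = q^{2m+4n+4}|m,n⟩`) equals `q⁴/((1−q²)(1−q⁴))`, and consequently the
index pairing `⟨[μ],[p]⟩ = −q⁻⁴(1−q²)(1−q⁴)·Tr(σ(t))` equals `−1`. -/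
theorem stmt_18 (q : ℝ) (hq0 : 0 < q) (hq1 : q < 1) :
    (∑' p : ℕ × ℕ, q ^ (2 * p.1 + 4 * p.2 + 4))
        = q ^ 4 / ((1 - q ^ 2) * (1 - q ^ 4)) ∧
    -(q⁻¹ ^ 4 * (1 - q ^ 2) * (1 - q ^ 4)) *
        (∑' p : ℕ × ℕ, q ^ (2 * p.1 + 4 * p.2 + 4)) = -1 := by
  have hq2 : |q ^ 2| < 1 := by
    rw [abs_of_pos (pow_pos hq0 2)]
    exact pow_lt_one₀ hq0.le hq1 (by norm_num)
  have hq4 : |q ^ 4| < 1 := by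
    rw [abs_of_pos (pow_pos hq0 4)]
    exact pow_lt_one₀ hq0.le hq1 (by norm_num)
  have hs2 : Summable (fun m : ℕ => (q ^ 2) ^ m) := summable_geometric_of_abs_lt_one hq2
  have hs4 : Summable (fun n : ℕ => (q ^ 4) ^ n) := summable_geometric_of_abs_lt_one hq4
  have hfun : ∀ p : ℕ × ℕ, q ^ (2 * p.1 + 4 * p.2 + 4)
      = (q ^ 2) ^ p.1 * ((q ^ 4) ^ p.2 * q ^ 4) := by
    intro p; rw [pow_add, pow_add, pow_mul, pow_mul]; ring
  have hnorm1 : Summable fun m : ℕ => ‖(q ^ 2) ^ m‖ := by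
    simpa only [Real.norm_eq_abs] using hs2.abs
  have hnorm2 : Summable fun n : ℕ => ‖(q ^ 4) ^ n * q ^ 4‖ := by
    simpa only [Real.norm_eq_abs] using (hs4.mul_right (q ^ 4)).abs
  have hmul := tsum_mul_tsum_of_summable_norm (f := fun m : ℕ => (q ^ 2) ^ m)
    (g := fun n : ℕ => (q ^ 4) ^ n * q ^ 4) hnorm1 hnorm2
  have h20 : (1 : ℝ) - q ^ 2 ≠ 0 := by
    have : q ^ 2 < 1 := by simpa [abs_of_pos (pow_pos hq0 2)] using hq2
    linarith
  have h40 : (1 : ℝ) - q ^ 4 ≠ 0 := by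
    have : q ^ 4 < 1 := by simpa [abs_of_pos (pow_pos hq0 4)] using hq4
    linarith
  have hT : (∑' p : ℕ × ℕ, q ^ (2 * p.1 + 4 * p.2 + 4))
      = q ^ 4 / ((1 - q ^ 2) * (1 - q ^ 4)) := by
    have h1 : (∑' p : ℕ × ℕ, q ^ (2 * p.1 + 4 * p.2 + 4))
        = (∑' m : ℕ, (q ^ 2) ^ m) * ∑' n : ℕ, (q ^ 4) ^ n * q ^ 4 := by
      rw [tsum_congr hfun]; exact hmul.symm
    rw [h1, tsum_geometric_of_abs_lt_one hq2, tsum_mul_right,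
      tsum_geometric_of_abs_lt_one hq4]
    field_simp
  refine ⟨hT, ?_⟩
  rw [hT]
  have hq40 : q ^ 4 ≠ 0 := pow_ne_zero 4 hq0.ne'
  field_simp
end
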